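/- Let q ≥ 2 and let 𝒯 = {X_1 → expr_1, …, X_n → expr_n} be an SLP representing T with |T| ≥ q, in which every variable occurs at least once in the derivation tree (vOcc(X_i) ≥ 1 for all i). Define dup(q,𝒯) = Σ {(vOcc(X_i) - 1) · (|t_i| - (q-1)) : X_i has a nonterminal rule and |val(X_i)| ≥ q}. Then (q-1) + Σ {|t_i| - (q-1) : X_i has a nonterminal rule and |val(X_i)| ≥ q} = |T| - dup(q,𝒯). -/

import Mathlib

/-!
Give every node of the derivation tree labeled `X_i` the weight `|t_i| - (q-1)` if `X_i` is a
nonterminal with `|val(X_i)| ≥ q`, and `0` otherwise. Since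
`|t_i| = min(q-1, |val(X_{ℓ(i)})|) + min(q-1, |val(X_{r(i)})|)`, induction on the rules shows that
the nodes of the subtree below a node labeled `X_i` weigh `|val(X_i)| - (q-1)` in total (the number
of `q`-grams of `val(X_i)`; this needs `q ≥ 2` at the leaves). Counting the nodes of the whole tree
by label gives `Σ vOcc(X_i) · weight(X_i) = |T| - (q-1)`, and splitting `vOcc = 1 + (vOcc - 1)`
yields the identity.
-/

/-- A straight line program over alphabet `α`: variables are `Fin n` (variable
`X_i` of the paper corresponds to index `i-1`), each with either a terminal
rule (a single character) or a nonterminal rule `X_i → X_j X_k` with `j,k < i`. -/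
structure SLP (α : Type) where
  n : ℕ
  npos : 0 < n
  rule : Fin n → α ⊕ (Fin n × Fin n)
  wf : ∀ i jk, rule i = Sum.inr jk → jk.1 < i ∧ jk.2 < i

namespace SLP

variable {α : Type}

/-- the string `val(X_i)` derived by a variable -/
def val (S : SLP α) (i : Fin S.n) : List α :=
  match h : S.rule i with
  | Sum.inl a => [a]
  | Sum.inr jk =>
    have _h1 := (S.wf i jk h).1
    have _h2 := (S.wf i jk h).2
    S.val jk.1 ++ S.val jk.2
termination_by i.val

/-- the last variable `X_n` -/
def lastIdx (S : SLP α) : Fin S.n := ⟨S.n - 1, Nat.sub_lt S.npos Nat.one_pos⟩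

/-- the string `T` represented by the SLP -/
def text (S : SLP α) : List α := S.val S.lastIdx

/-- `T([i:j])`: the (1-based, inclusive) substring of a string -/
def substr (T : List α) (i j : ℕ) : List α := (T.drop (i - 1)).take (j + 1 - i)

/-- `pre(T,q)` -/
def spre (T : List α) (q : ℕ) : List α := T.take q

/-- `suf(T,q)` -/
def ssuf (T : List α) (q : ℕ) : List α := T.drop (T.length - q)

/-- `pre([b:e],q)` for intervals of positions -/
def ipre (b e q : ℕ) : Finset ℕ := Finset.Icc b (min (b + q - 1) e)

/-- `suf([b:e],q)` for intervals of positions -/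
def isuf (b e q : ℕ) : Finset ℕ := Finset.Icc (max b (e + 1 - q)) e

/-- `Occ(T,P)`: the set of (1-based) occurrences of `P` in `T` -/
def Occ [DecidableEq α] (T P : List α) : Finset ℕ :=
  (Finset.Icc 1 T.length).filter fun k => substr T k (k + P.length - 1) = P

/-- the multiset of labels of the nodes of the derivation tree rooted at
a node labeled `X_i` -/
def occsFrom (S : SLP α) (i : Fin S.n) : Multiset (Fin S.n) :=
  match h : S.rule i with
  | Sum.inl _ => {i}
  | Sum.inr jk =>
    have _h1 := (S.wf i jk h).1
    have _h2 := (S.wf i jk h).2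
    i ::ₘ (S.occsFrom jk.1 + S.occsFrom jk.2)
termination_by i.val

/-- `vOcc(X_i)`: the number of nodes of the derivation tree labeled `X_i` -/
def vOcc (S : SLP α) (i : Fin S.n) : ℕ := (S.occsFrom S.lastIdx).count i

/-- the string `t_i = suf(val(X_{ℓ(i)}),q-1) pre(val(X_{r(i)}),q-1)`
(and `[]` for a terminal rule) -/
def tstr (S : SLP α) (q : ℕ) (i : Fin S.n) : List α :=
  match S.rule i with
  | Sum.inl _ => []
  | Sum.inr jk => ssuf (S.val jk.1) (q - 1) ++ spre (S.val jk.2) (q - 1)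

/-- `label(X_i) = t_i([q:|t_i|])` -/
def labelStr (S : SLP α) (q : ℕ) (i : Fin S.n) : List α := (S.tstr q i).drop (q - 1)

/-- Nodes of the derivation tree are represented by the path from the root
(`false` = go to left child, `true` = go to right child).  `descend i p`
returns the label of the node reached from a node labeled `X_i` by path `p`. -/
def descend (S : SLP α) : Fin S.n → List Bool → Option (Fin S.n)
  | i, [] => some i
  | i, b :: p =>
    match S.rule i with
    | Sum.inl _ => none
    | Sum.inr jk => S.descend (if b then jk.2 else jk.1) p

/-- the label of the node of the derivation tree reached by path `p` from the root -/
def nodeVar (S : SLP α) (p : List Bool) : Option (Fin S.n) := S.descend S.lastIdx p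

/-- `p` is a valid node of the derivation tree -/
def IsNode (S : SLP α) (p : List Bool) : Prop := (S.nodeVar p).isSome

/-- the 0-based offset in `val(X_i)` of the part derived below path `p` -/
def offsetFrom (S : SLP α) : Fin S.n → List Bool → ℕ
  | _, [] => 0
  | i, b :: p =>
    match S.rule i with
    | Sum.inl _ => 0
    | Sum.inr jk =>
      if b then (S.val jk.1).length + S.offsetFrom jk.2 p
      else S.offsetFrom jk.1 p

/-- the 0-based offset in `T` of the interval derived by node `p` -/
def offset (S : SLP α) (p : List Bool) : ℕ := S.offsetFrom S.lastIdx p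

/-- `itv(v)`: the (1-based) interval of positions of `T` derived by node `p` -/
def itv (S : SLP α) (p : List Bool) : Finset ℕ :=
  match S.nodeVar p with
  | some i => Finset.Icc (S.offset p + 1) (S.offset p + (S.val i).length)
  | none => ∅

/-- `p = ξ(b,e)`: `p` is the deepest node whose interval contains `[b:e]`,
i.e. `itv(p) ⊇ [b:e]` and no proper descendant of `p` satisfies this. -/
def Stabs (S : SLP α) (p : List Bool) (b e : ℕ) : Prop :=
  S.IsNode p ∧ Finset.Icc b e ⊆ S.itv p ∧
  ∀ p' : List Bool, p <+: p' → p ≠ p' → S.IsNode p' → ¬ Finset.Icc b e ⊆ S.itv p'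

/-- `X_j` is a right `q`-gram neighbor of `X_i` -/
def RightNbr (S : SLP α) (q : ℕ) (i j : Fin S.n) : Prop :=
  i ≠ j ∧ ∃ u p p', 1 ≤ u ∧ u + q ≤ S.text.length ∧
    S.Stabs p u (u + q - 1) ∧ S.nodeVar p = some i ∧
    S.Stabs p' (u + 1) (u + q) ∧ S.nodeVar p' = some j

/-- `lm_q(X_i)`: the last variable of length `≥ q` on the sequence `i, ℓ(i), ℓ(ℓ(i)), …`
(meaningful when `|val(X_i)| ≥ q`) -/
def lm (S : SLP α) (q : ℕ) (i : Fin S.n) : Fin S.n :=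
  match h : S.rule i with
  | Sum.inl _ => i
  | Sum.inr jk =>
    have := (S.wf i jk h).1
    if (S.val jk.1).length < q then i else S.lm q jk.1
termination_by i.val

/-- `rm_q(X_i)`: the last variable of length `≥ q` on the sequence `i, r(i), r(r(i)), …` -/
def rm (S : SLP α) (q : ℕ) (i : Fin S.n) : Fin S.n :=
  match h : S.rule i with
  | Sum.inl _ => i
  | Sum.inr jk =>
    have := (S.wf i jk h).2
    if (S.val jk.2).length < q then i else S.rm q jk.2
termination_by i.val

/-- `lm_q` returning `null` (`none`) when `|val(X_i)| < q` -/
def lmOpt (S : SLP α) (q : ℕ) (i : Fin S.n) : Option (Fin S.n) :=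
  if (S.val i).length < q then none else some (S.lm q i)

/-- `rm_q` returning `null` (`none`) when `|val(X_i)| < q` -/
def rmOpt (S : SLP α) (q : ℕ) (i : Fin S.n) : Option (Fin S.n) :=
  if (S.val i).length < q then none else some (S.rm q i)

/-- `LSpine S i k`: `k` occurs in the sequence `i, ℓ(i), ℓ(ℓ(i)), …`
(the leftmost path of the derivation subtree rooted at a node labeled `X_i`) -/
inductive LSpine (S : SLP α) : Fin S.n → Fin S.n → Prop
  | refl (i : Fin S.n) : LSpine S i i
  | step {i k : Fin S.n} {jk : Fin S.n × Fin S.n} :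
      S.rule i = Sum.inr jk → LSpine S jk.1 k → LSpine S i k

end SLP

theorem Multiset.sum_map_eq_sum_count_nsmul {ι M : Type*} [Fintype ι] [DecidableEq ι]
    [AddCommMonoid M] (s : Multiset ι) (f : ι → M) :
    (s.map f).sum = ∑ i, s.count i • f i := by
  rw [Finset.sum_multiset_map_count]
  exact Finset.sum_subset (Finset.subset_univ _) fun i _ hi => by
    rw [Multiset.count_eq_zero.mpr (by simpa using hi), zero_smul]

namespace SLP

variable {α : Type} (S : SLP α)

lemma val_of_rule_inl {i : Fin S.n} {a : α} (h : S.rule i = Sum.inl a) : S.val i = [a] := by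
  rw [val]; split <;> simp_all

lemma val_of_rule_inr {i : Fin S.n} {jk : Fin S.n × Fin S.n} (h : S.rule i = Sum.inr jk) :
    S.val i = S.val jk.1 ++ S.val jk.2 := by
  rw [val]; split <;> simp_all

lemma occsFrom_of_rule_inl {i : Fin S.n} {a : α} (h : S.rule i = Sum.inl a) :
    S.occsFrom i = {i} := by
  rw [occsFrom]; split <;> simp_all

lemma occsFrom_of_rule_inr {i : Fin S.n} {jk : Fin S.n × Fin S.n} (h : S.rule i = Sum.inr jk) :
    S.occsFrom i = i ::ₘ (S.occsFrom jk.1 + S.occsFrom jk.2) := by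
  rw [occsFrom]; split <;> simp_all

lemma length_tstr_of_rule_inr (q : ℕ) {i : Fin S.n} {jk : Fin S.n × Fin S.n}
    (h : S.rule i = Sum.inr jk) :
    (S.tstr q i).length = min (q - 1) (S.val jk.1).length + min (q - 1) (S.val jk.2).length := by
  simp only [tstr, h, ssuf, spre, List.length_append, List.length_drop, List.length_take]
  omega

lemma length_val_pos (i : Fin S.n) : 0 < (S.val i).length := by
  match h : S.rule i with
  | Sum.inl a => simp [S.val_of_rule_inl h]
  | Sum.inr jk =>
    have := (S.wf i jk h).1
    have := length_val_pos jk.1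
    rw [S.val_of_rule_inr h, List.length_append]
    omega
termination_by i.val

def qgramWeight (q : ℕ) (i : Fin S.n) : ℕ :=
  if (S.rule i).isRight = true ∧ q ≤ (S.val i).length then (S.tstr q i).length - (q - 1) else 0

lemma sum_qgramWeight_occsFrom {q : ℕ} (hq : 2 ≤ q) (i : Fin S.n) :
    ((S.occsFrom i).map (S.qgramWeight q)).sum = (S.val i).length - (q - 1) := by
  match h : S.rule i with
  | Sum.inl a =>
    have hw : S.qgramWeight q i = 0 := by simp [qgramWeight, h]
    simp only [S.occsFrom_of_rule_inl h, S.val_of_rule_inl h, Multiset.map_singleton,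
      Multiset.sum_singleton, hw, List.length_singleton]
    omega
  | Sum.inr jk =>
    have := (S.wf i jk h).1
    have := (S.wf i jk h).2
    have hl := S.length_val_pos jk.1
    have hr := S.length_val_pos jk.2
    have ihl := sum_qgramWeight_occsFrom hq jk.1
    have ihr := sum_qgramWeight_occsFrom hq jk.2
    have hw : S.qgramWeight q i = if q ≤ (S.val jk.1).length + (S.val jk.2).length then
        min (q - 1) (S.val jk.1).length + min (q - 1) (S.val jk.2).length - (q - 1) else 0 := by
      simp [qgramWeight, h, S.val_of_rule_inr h, S.length_tstr_of_rule_inr q h]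
    simp only [S.occsFrom_of_rule_inr h, S.val_of_rule_inr h, Multiset.map_cons,
      Multiset.map_add, Multiset.sum_cons, Multiset.sum_add, ihl, ihr, hw,
      List.length_append]
    split <;> omega
termination_by i.val

lemma sum_vOcc_mul_qgramWeight {q : ℕ} (hq : 2 ≤ q) :
    ∑ i, S.vOcc i * S.qgramWeight q i = S.text.length - (q - 1) := by
  classical
  rw [text, ← S.sum_qgramWeight_occsFrom hq, Multiset.sum_map_eq_sum_count_nsmul]
  simp only [vOcc, smul_eq_mul]

end SLP

/-- Lemma 9 of the paper: with
`dup(q,𝒯) = Σ (vOcc(X_i) - 1)·(|t_i| - (q-1))` over nonterminal variables with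
`|val(X_i)| ≥ q`, we have `(q-1) + Σ (|t_i| - (q-1)) = |T| - dup(q,𝒯)`. -/
theorem stmt12 {α : Type} (q : ℕ) (hq : 2 ≤ q) (S : SLP α)
    (hT : q ≤ S.text.length) (hocc : ∀ i, 1 ≤ S.vOcc i) :
    (q - 1) + ∑ i ∈ Finset.univ.filter
        (fun i : Fin S.n => (S.rule i).isRight = true ∧ q ≤ (S.val i).length),
        ((S.tstr q i).length - (q - 1)) =
      S.text.length - ∑ i ∈ Finset.univ.filter
          (fun i : Fin S.n => (S.rule i).isRight = true ∧ q ≤ (S.val i).length),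
        (S.vOcc i - 1) * ((S.tstr q i).length - (q - 1)) := by
  have hsum := S.sum_vOcc_mul_qgramWeight hq
  simp only [SLP.qgramWeight, mul_ite, mul_zero, ← Finset.sum_filter] at hsum
  have hsplit : ∀ i, S.vOcc i * ((S.tstr q i).length - (q - 1)) =
      ((S.tstr q i).length - (q - 1)) + (S.vOcc i - 1) * ((S.tstr q i).length - (q - 1)) := by
    intro i
    obtain ⟨k, hk⟩ := Nat.exists_eq_add_of_le (hocc i)
    rw [hk, Nat.add_sub_cancel_left, add_mul, one_mul]
  simp only [hsplit, Finset.sum_add_distrib] at hsum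
  omega
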